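/- Let y be an element of a group G and H a finitely generated subgroup of G. Suppose that for some n ≥ 1 the subgroup E_n(y) satisfies the maximal condition on subgroups. Then the subgroup H^⟨y⟩, the smallest subgroup of G containing H and normalized by y, is finitely generated. -/

import Mathlib

def engel {G : Type*} [Group G] (y x : G) : ℕ → G
  | 0 => y
  | n+1 => (engel y x n)⁻¹ * x⁻¹ * engel y x n * x

def En {G : Type*} [Group G] (n : ℕ) (x : G) : Subgroup G :=
  Subgroup.closure {g | ∃ y : G, g = engel y x n}

section aux

variable {G : Type*} [Group G]

/-- The set of all conjugates of elements of `S` by integer powers of `y`. -/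
def conjSet (y : G) (S : Set G) : Set G :=
  {g | ∃ k : ℤ, ∃ h ∈ S, g = (y ^ k)⁻¹ * h * y ^ k}

/-- The set of commutators `[h, y]` for `h ∈ S`. -/
def commSet (y : G) (S : Set G) : Set G := (fun h => h⁻¹ * y⁻¹ * h * y) '' S

def commIter (y : G) (S : Set G) : ℕ → Set G
  | 0 => S
  | j+1 => commSet y (commIter y S j)

lemma mem_conjSet (y : G) {S : Set G} {h : G} (hS : h ∈ S) (k : ℤ) :
    (y ^ k)⁻¹ * h * y ^ k ∈ conjSet y S := ⟨k, h, hS, rfl⟩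

lemma mem_aux (y : G) (S : Set G) {h : G} (hS : h ∈ S) : ∀ k : ℤ,
    (y ^ k)⁻¹ * h * y ^ k ∈ Subgroup.closure (S ∪ conjSet y (commSet y S)) := by
  intro k
  induction k using Int.induction_on with
  | zero => simpa using Subgroup.subset_closure (Set.mem_union_left _ hS)
  | succ k ih =>
      have hc : (y ^ (k : ℤ))⁻¹ * (h⁻¹ * y⁻¹ * h * y) * y ^ (k : ℤ) ∈
          Subgroup.closure (S ∪ conjSet y (commSet y S)) :=
        Subgroup.subset_closure (Set.mem_union_right _
          (mem_conjSet y (Set.mem_image_of_mem _ hS) k))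
      have := Subgroup.mul_mem _ ih hc
      convert this using 1
      group
  | pred k ih =>
      have hc : (y ^ (-(k : ℤ) - 1))⁻¹ * (h⁻¹ * y⁻¹ * h * y) * y ^ (-(k : ℤ) - 1) ∈
          Subgroup.closure (S ∪ conjSet y (commSet y S)) :=
        Subgroup.subset_closure (Set.mem_union_right _
          (mem_conjSet y (Set.mem_image_of_mem _ hS) _))
      have := Subgroup.mul_mem _ ih (Subgroup.inv_mem _ hc)
      convert this using 1
      group

lemma closure_conjSet_eq (y : G) (S : Set G) :
    Subgroup.closure (conjSet y S) =
      Subgroup.closure (S ∪ conjSet y (commSet y S)) := by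
  apply le_antisymm
  · rw [Subgroup.closure_le]
    rintro g ⟨k, h, hS, rfl⟩
    exact mem_aux y S hS k
  · rw [Subgroup.closure_le]
    rintro g (hg | ⟨k, c, ⟨h, hS, rfl⟩, rfl⟩)
    · have := Subgroup.subset_closure (mem_conjSet y hg (0 : ℤ))
      simpa using this
    · have h1 := Subgroup.subset_closure (mem_conjSet y hS k)
      have h2 := Subgroup.subset_closure (mem_conjSet y hS (k + 1))
      have := Subgroup.mul_mem _ (Subgroup.inv_mem _ h1) h2
      convert this using 1
      group
      exact Iff.rfl

lemma closure_conjSet_iter (y : G) (S : Set G) (n : ℕ) :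
    Subgroup.closure (conjSet y S) =
      Subgroup.closure ((⋃ i ∈ Finset.range n, commIter y S i) ∪
        conjSet y (commIter y S n)) := by
  induction n with
  | zero => simp [commIter]
  | succ n ih =>
      rw [ih, Finset.range_add_one]
      rw [Subgroup.closure_union, Subgroup.closure_union,
        closure_conjSet_eq y (commIter y S n), Subgroup.closure_union]
      rw [Finset.set_biUnion_insert, Subgroup.closure_union, ← sup_assoc,
        sup_comm (Subgroup.closure (⋃ i ∈ Finset.range n, commIter y S i))
          (Subgroup.closure (commIter y S n))]
      rfl

lemma engel_map {H : Type*} [Group H] (f : G →* H) (h y : G) (n : ℕ) :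
    f (engel h y n) = engel (f h) (f y) n := by
  induction n with
  | zero => rfl
  | succ n ih =>
      show f ((engel h y n)⁻¹ * y⁻¹ * engel h y n * y) = _
      rw [map_mul, map_mul, map_mul, map_inv, map_inv, ih]
      rfl

lemma engel_conj (y h : G) (k : ℤ) (n : ℕ) :
    (y ^ k)⁻¹ * engel h y n * y ^ k = engel ((y ^ k)⁻¹ * h * y ^ k) y n := by
  have h1 := engel_map ((MulAut.conj (y ^ k)⁻¹).toMonoidHom) h y n
  simp only [MulEquiv.coe_toMonoidHom, MulAut.conj_apply, inv_inv] at h1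
  have hy : (y ^ k)⁻¹ * y * y ^ k = y := by group
  rw [hy] at h1
  exact h1

lemma commIter_eq_image (y : G) (S : Set G) (n : ℕ) :
    commIter y S n = (fun h => engel h y n) '' S := by
  induction n with
  | zero =>
      show S = (fun h => engel h y 0) '' S
      exact (Set.image_id S).symm
  | succ n ih =>
      show commSet y (commIter y S n) = _
      rw [ih, commSet, Set.image_image]
      rfl

lemma conjSet_commIter_subset (y : G) (S : Set G) (n : ℕ) :
    conjSet y (commIter y S n) ⊆ {g | ∃ z : G, g = engel z y n} := by
  rintro g ⟨k, c, hc, rfl⟩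
  rw [commIter_eq_image] at hc
  obtain ⟨h, _, rfl⟩ := hc
  refine ⟨(y ^ k)⁻¹ * h * y ^ k, ?_⟩
  rw [← engel_conj y h k n]

end aux

theorem stmt5 {G : Type*} [Group G] (y : G) (H : Subgroup G) (hH : H.FG)
    (n : ℕ) (hn : 1 ≤ n)
    (hmax : ∀ K : Subgroup G, K ≤ En n y → K.FG) :
    (Subgroup.closure {g | ∃ k : ℤ, ∃ h ∈ H, g = (y ^ k)⁻¹ * h * y ^ k}).FG := by
  obtain ⟨S, hSclos, hSfin⟩ := (Subgroup.fg_iff H).mp hH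
  -- Step 1: the target is the closure of `conjSet y S`.
  have step1 : Subgroup.closure {g | ∃ k : ℤ, ∃ h ∈ H, g = (y ^ k)⁻¹ * h * y ^ k} =
      Subgroup.closure (conjSet y S) := by
    have key : ∀ T : Set G, Subgroup.closure (conjSet y T) =
        ⨆ k : ℤ, (Subgroup.closure T).map (MulAut.conj (y ^ k)⁻¹).toMonoidHom := by
      intro T
      have : conjSet y T = ⋃ k : ℤ, (fun h => (y ^ k)⁻¹ * h * y ^ k) '' T := by
        ext g
        simp only [conjSet, Set.mem_setOf_eq, Set.mem_iUnion, Set.mem_image]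
        constructor
        · rintro ⟨k, h, hh, rfl⟩; exact ⟨k, h, hh, rfl⟩
        · rintro ⟨k, h, hh, rfl⟩; exact ⟨k, h, hh, rfl⟩
      have himg : ∀ k : ℤ, (fun h => (y ^ k)⁻¹ * h * y ^ k) '' T =
          ⇑((MulAut.conj (y ^ k)⁻¹).toMonoidHom) '' T := by
        intro k
        apply Set.image_congr
        intro h _
        simp only [MulEquiv.coe_toMonoidHom, MulAut.conj_apply, inv_inv]
      rw [this, Subgroup.closure_iUnion]
      refine iSup_congr fun k => ?_
      rw [himg k, ← MonoidHom.map_closure]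
    rw [show {g | ∃ k : ℤ, ∃ h ∈ H, g = (y ^ k)⁻¹ * h * y ^ k} = conjSet y (H : Set G) from rfl,
      key, key, Subgroup.closure_eq, hSclos]
  rw [step1, closure_conjSet_iter y (↑S) n]
  -- The tail subgroup lies in `En n y`, so it is finitely generated.
  have htail : Subgroup.closure (conjSet y (commIter y (↑S) n)) ≤ En n y := by
    rw [Subgroup.closure_le]
    exact fun g hg => Subgroup.subset_closure (conjSet_commIter_subset y (↑S) n hg)
  obtain ⟨T, hTclos, hTfin⟩ := (Subgroup.fg_iff _).mp (hmax _ htail)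
  rw [Subgroup.closure_union, ← hTclos, ← Subgroup.closure_union]
  apply (Subgroup.fg_iff _).mpr
  refine ⟨_, rfl, Set.Finite.union ?_ hTfin⟩
  apply Set.Finite.biUnion (Finset.range n).finite_toSet
  intro i _
  rw [commIter_eq_image]
  exact hSfin.image _
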